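/- Let A, B, C be subspaces of E. If A ⊥g B and A ⊥g C, then A ⊥g (B ⊔ C) or A ⊆ B ⊔ C. -/

import Mathlib

/-
The relation `X₁ ⊥g∘ X₂` only depends on directions: with `D` the direction of `X₁ ∩ X₂`, it says
that `X₁ ∩ X₂` is nonempty and that the orthogonal complement of `D` inside the direction of `X₁`
is orthogonal to the whole direction of `X₂` (the witnesses `Zᵢ` can always be taken to be these
relative orthogonal complements). Now let `A ⊥g B` and `A ⊥g C`, with `q₁ ∈ A ∩ B`, `q₂ ∈ A ∩ C`.
A vector `u` of `A` orthogonal to the direction of `A ∩ (B ⊔ C)` is orthogonal to the directions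
of `A ∩ B` and `A ∩ C`, hence to those of `B` and `C`, and to `q₂ - q₁`, which lies in
`A ∩ (B ⊔ C)`; these three span the direction of `B ⊔ C`. So `A ⊥g∘ (B ⊔ C)`. Finally
`A ∩ (B ⊔ C) = B ⊔ C` would give `B ≤ A`, which `A ⊥g B` excludes.
-/

/-- `Perp X Y`: every vector in the direction of `X` is orthogonal to every
vector in the direction of `Y`. -/
def Perp {E : Type*} [NormedAddCommGroup E] [InnerProductSpace ℝ E]
    (X Y : AffineSubspace ℝ E) : Prop :=
  ∀ u ∈ X.direction, ∀ v ∈ Y.direction, (inner ℝ u v : ℝ) = 0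

/-- `PerpX X Y`: `X ⊥ Y` and `X ∩ Y ≠ ∅`. -/
def PerpX {E : Type*} [NormedAddCommGroup E] [InnerProductSpace ℝ E]
    (X Y : AffineSubspace ℝ E) : Prop :=
  Perp X Y ∧ ((X : Set E) ∩ (Y : Set E)).Nonempty

/-- `PerpGo X₁ X₂`: the relation `⊥g∘`. -/
def PerpGo {E : Type*} [NormedAddCommGroup E] [InnerProductSpace ℝ E]
    (X₁ X₂ : AffineSubspace ℝ E) : Prop :=
  ∃ q : E, q ∈ X₁ ⊓ X₂ ∧ ∃ Z₁ Z₂ : AffineSubspace ℝ E,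
    q ∈ Z₁ ∧ q ∈ Z₂ ∧ PerpX Z₁ (X₁ ⊓ X₂) ∧ PerpX Z₂ (X₁ ⊓ X₂) ∧ PerpX Z₁ Z₂ ∧
    (X₁ ⊓ X₂) ⊔ Z₁ = X₁ ∧ (X₁ ⊓ X₂) ⊔ Z₂ = X₂

/-- `PerpG X₁ X₂`: the relation `⊥g`. -/
def PerpG {E : Type*} [NormedAddCommGroup E] [InnerProductSpace ℝ E]
    (X₁ X₂ : AffineSubspace ℝ E) : Prop :=
  PerpGo X₁ X₂ ∧ X₁ ⊓ X₂ ≠ X₁ ∧ X₁ ⊓ X₂ ≠ X₂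

/-- Dimension of an affine subspace: the dimension of its direction. -/
noncomputable def adim {E : Type*} [NormedAddCommGroup E] [InnerProductSpace ℝ E]
    (X : AffineSubspace ℝ E) : ℕ :=
  Module.finrank ℝ X.direction

open Submodule AffineSubspace

section

variable {E : Type*} [NormedAddCommGroup E] [InnerProductSpace ℝ E]

lemma Submodule.orthogonal_inf_sup_eq_of_isOrtho {K S : Submodule ℝ E} (h : S ⟂ K) :
    Kᗮ ⊓ (K ⊔ S) = S := by
  rw [inf_comm, sup_comm, sup_inf_assoc_of_le K h.le, inf_orthogonal_eq_bot, sup_bot_eq]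

lemma AffineSubspace.sup_mk'_orthogonal_inf {Y X : AffineSubspace ℝ E}
    [Y.direction.HasOrthogonalProjection] {q : E} (hq : q ∈ Y) (hYX : Y ≤ X) :
    Y ⊔ mk' q (Y.directionᗮ ⊓ X.direction) = X := by
  refine ext_of_direction_eq ?_ ⟨q, (le_sup_left : Y ≤ _) hq, hYX hq⟩
  rw [direction_sup_eq_sup_direction hq (self_mem_mk' _ _), direction_mk']
  exact sup_orthogonal_inf_of_hasOrthogonalProjection (direction_le hYX)

lemma perp_iff_isOrtho {X Y : AffineSubspace ℝ E} : Perp X Y ↔ X.direction ⟂ Y.direction :=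
  isOrtho_iff_inner_eq.symm

lemma perpX_mk' {q : E} {S : Submodule ℝ E} {Y : AffineSubspace ℝ E} (hq : q ∈ Y)
    (h : S ⟂ Y.direction) : PerpX (mk' q S) Y :=
  ⟨perp_iff_isOrtho.2 (by rwa [direction_mk']), q, self_mem_mk' q S, hq⟩

lemma PerpGo.isOrtho {X₁ X₂ : AffineSubspace ℝ E} (h : PerpGo X₁ X₂) :
    (X₁ ⊓ X₂).directionᗮ ⊓ X₁.direction ⟂ X₂.direction := by
  obtain ⟨q, hq, Z₁, Z₂, hqZ₁, hqZ₂, ⟨hZ₁, -⟩, -, ⟨hZ₁₂, -⟩, hX₁, hX₂⟩ := h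
  rw [perp_iff_isOrtho] at hZ₁ hZ₁₂
  have hd₁ : X₁.direction = (X₁ ⊓ X₂).direction ⊔ Z₁.direction := by
    rw [← direction_sup_eq_sup_direction hq hqZ₁, hX₁]
  have hd₂ : X₂.direction = (X₁ ⊓ X₂).direction ⊔ Z₂.direction := by
    rw [← direction_sup_eq_sup_direction hq hqZ₂, hX₂]
  rw [hd₁, hd₂, orthogonal_inf_sup_eq_of_isOrtho hZ₁]
  exact isOrtho_sup_right.2 ⟨hZ₁, hZ₁₂⟩

lemma perpGo_iff {X₁ X₂ : AffineSubspace ℝ E} [(X₁ ⊓ X₂).direction.HasOrthogonalProjection] :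
    PerpGo X₁ X₂ ↔ ((X₁ ⊓ X₂ : AffineSubspace ℝ E) : Set E).Nonempty ∧
      (X₁ ⊓ X₂).directionᗮ ⊓ X₁.direction ⟂ X₂.direction := by
  refine ⟨fun h => ⟨h.elim fun q hq => ⟨q, hq.1⟩, h.isOrtho⟩, fun ⟨⟨q, hq⟩, h⟩ => ?_⟩
  set D := (X₁ ⊓ X₂).direction
  refine ⟨q, hq, mk' q (Dᗮ ⊓ X₁.direction), mk' q (Dᗮ ⊓ X₂.direction), self_mem_mk' _ _,
    self_mem_mk' _ _, perpX_mk' hq ((isOrtho_orthogonal_left D).mono_left inf_le_left),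
    perpX_mk' hq ((isOrtho_orthogonal_left D).mono_left inf_le_left),
    perpX_mk' (self_mem_mk' _ _) (by rw [direction_mk']; exact h.mono_right inf_le_right),
    sup_mk'_orthogonal_inf hq inf_le_left, sup_mk'_orthogonal_inf hq inf_le_right⟩

lemma isOrtho_inf_sup_of_isOrtho {A B C : AffineSubspace ℝ E} {q₁ q₂ : E}
    (hq₁ : q₁ ∈ A ⊓ B) (hq₂ : q₂ ∈ A ⊓ C)
    (hB : (A ⊓ B).directionᗮ ⊓ A.direction ⟂ B.direction)
    (hC : (A ⊓ C).directionᗮ ⊓ A.direction ⟂ C.direction) :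
    (A ⊓ (B ⊔ C)).directionᗮ ⊓ A.direction ⟂ (B ⊔ C).direction := by
  set N := (A ⊓ (B ⊔ C)).direction
  have hBN : (A ⊓ B).direction ≤ N := direction_le (inf_le_inf_left A le_sup_left)
  have hCN : (A ⊓ C).direction ≤ N := direction_le (inf_le_inf_left A le_sup_right)
  have hq : q₂ -ᵥ q₁ ∈ N := vsub_mem_direction (inf_le_inf_left A le_sup_right hq₂)
    (inf_le_inf_left A le_sup_left hq₁)
  rw [direction_sup hq₁.2 hq₂.2, isOrtho_sup_right, isOrtho_sup_right]
  exact ⟨⟨hB.mono_left (inf_le_inf_right _ (orthogonal_le hBN)),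
    hC.mono_left (inf_le_inf_right _ (orthogonal_le hCN))⟩,
    (isOrtho_orthogonal_left N).mono inf_le_left ((span_singleton_le_iff_mem _ _).2 hq)⟩

end

variable {E : Type*} [NormedAddCommGroup E] [InnerProductSpace ℝ E] [FiniteDimensional ℝ E]

theorem stmt9_general (A B C : AffineSubspace ℝ E)
    (h₁ : PerpG A B) (h₂ : PerpG A C) :
    PerpG A (B ⊔ C) ∨ A ≤ B ⊔ C := by
  refine or_iff_not_imp_right.2 fun hA => ⟨?_, fun h => hA (inf_eq_left.1 h), fun h => ?_⟩
  · obtain ⟨⟨q₁, hq₁⟩, hB⟩ := perpGo_iff.1 h₁.1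
    obtain ⟨⟨q₂, hq₂⟩, hC⟩ := perpGo_iff.1 h₂.1
    exact perpGo_iff.2 ⟨⟨q₁, inf_le_inf_left A le_sup_left hq₁⟩,
      isOrtho_inf_sup_of_isOrtho hq₁ hq₂ hB hC⟩
  · exact h₁.2.2 (inf_eq_right.2 (le_sup_left.trans (inf_eq_right.1 h)))

theorem stmt9 (A B C : AffineSubspace ℝ E)
    (hA : (A : Set E).Nonempty) (hB : (B : Set E).Nonempty) (hC : (C : Set E).Nonempty)
    (h₁ : PerpG A B) (h₂ : PerpG A C) :
    PerpG A (B ⊔ C) ∨ A ≤ B ⊔ C :=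
  stmt9_general A B C h₁ h₂
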